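/- arXiv:2410.11156 — 3 statements merged into one kernel-verified Lean document; each statement's English description precedes it below -/
import Mathlib

section
/- Let S be a type, s ∈ S, and φ a predicate over S. Then λ⁺(s, φ) = 0 if and only if s ⊨ φ. -/
/-- Predicates over a state space `S`:
`φ ::= ⊤ | ⊥ | (μ ≥ 0) | φ ∧ φ | φ ∨ φ` where each atom carries `μ : S → ℝ`. -/
inductive Phi (S : Type*) where
  | top : Phi S
  | bot : Phi S
  | atom (μ : S → ℝ) : Phi S
  | and (φ₁ φ₂ : Phi S) : Phi S
  | or (φ₁ φ₂ : Phi S) : Phi S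

/-- Satisfaction `s ⊨ φ` of a predicate by a state. -/
def Phi.Sat {S : Type*} (s : S) : Phi S → Prop
  | .top => True
  | .bot => False
  | .atom μ => μ s ≥ 0
  | .and φ₁ φ₂ => φ₁.Sat s ∧ φ₂.Sat s
  | .or φ₁ φ₂ => φ₁.Sat s ∨ φ₂.Sat s

/-- The `(max,+)` generalized weight `λ⁺ : S × Φ → EReal`. -/
noncomputable def lamP {S : Type*} (s : S) : Phi S → EReal
  | .top => 0
  | .bot => ⊥
  | .atom μ => if μ s ≥ 0 then 0 else ((μ s : ℝ) : EReal)
  | .and φ₁ φ₂ => lamP s φ₁ + lamP s φ₂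
  | .or φ₁ φ₂ => max (lamP s φ₁) (lamP s φ₂)


/-!
Every weight `λ⁺(s, φ)` is `≤ 0`. Among nonpositive values a sum vanishes iff both summands do
and a maximum vanishes iff one argument does, so `λ⁺(s, ·) = 0` follows the Boolean connectives
of `⊨`, and induction on `φ` finishes the proof.
-/

theorem add_eq_zero_iff_of_nonpos {α : Type*} [AddZeroClass α] [PartialOrder α] [AddLeftMono α]
    [AddRightMono α] {a b : α} (ha : a ≤ 0) (hb : b ≤ 0) : a + b = 0 ↔ a = 0 ∧ b = 0 :=
  add_eq_zero_iff_of_nonneg (α := αᵒᵈ) ha hb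

theorem max_eq_iff_of_le {α : Type*} [LinearOrder α] {a b c : α} (ha : a ≤ c) (hb : b ≤ c) :
    max a b = c ↔ a = c ∨ b = c := by
  rcases le_total a b with hab | hba
  · rw [max_eq_right hab]
    exact ⟨Or.inr, fun h => h.elim (fun hac => le_antisymm hb (hac ▸ hab)) id⟩
  · rw [max_eq_left hba]
    exact ⟨Or.inl, fun h => h.elim id (fun hbc => le_antisymm ha (hbc ▸ hba))⟩

theorem lamP_nonpos {S : Type*} (s : S) (φ : Phi S) : lamP s φ ≤ 0 := by
  induction φ with
  | top => exact le_rfl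
  | bot => exact bot_le
  | atom μ =>
    simp only [lamP]
    split_ifs with h
    exacts [le_rfl, EReal.coe_nonpos.2 (not_le.1 h).le]
  | and φ₁ φ₂ ih₁ ih₂ => exact add_nonpos ih₁ ih₂
  | or φ₁ φ₂ ih₁ ih₂ => exact max_le ih₁ ih₂

/-- **The `(max,+)` weight vanishes exactly on satisfying states.**
For every state `s` and predicate `φ`, `λ⁺(s, φ) = 0` iff `s ⊨ φ`. -/
theorem lamP_eq_zero_iff_sat {S : Type*} (s : S) (φ : Phi S) :
    lamP s φ = 0 ↔ φ.Sat s := by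
  induction φ with
  | top => simp [lamP, Phi.Sat]
  | bot => simp [lamP, Phi.Sat]
  | atom μ =>
    by_cases h : μ s ≥ 0
    · simp [lamP, Phi.Sat, h]
    · simp [lamP, Phi.Sat, h, (not_le.1 h).ne]
  | and φ₁ φ₂ ih₁ ih₂ =>
    rw [lamP, Phi.Sat, add_eq_zero_iff_of_nonpos (lamP_nonpos s φ₁) (lamP_nonpos s φ₂), ih₁, ih₂]
  | or φ₁ φ₂ ih₁ ih₂ =>
    rw [lamP, Phi.Sat, max_eq_iff_of_le (lamP_nonpos s φ₁) (lamP_nonpos s φ₂), ih₁, ih₂]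
end

section
/- Let S be a type, Q a finite type of locations with subsets Q₀ (initial) and Q_F (accepting), Δ : Q → Q → Φ a transition labeling by predicates over S, and ξ = (x_0, …, x_l) ∈ S^{l+1} a trace. Define the (min,max) weight of ξ as wᵐ(ξ) = sup over all location sequences (q_0, …, q_{l+1}) with q_0 ∈ Q₀ and q_{l+1} ∈ Q_F of min_{0 ≤ t ≤ l} λᵐ(x_t, Δ(q_t, q_{t+1})) (supremum in EReal, equal to -∞ if no such sequence exists). Then wᵐ(ξ) = 0 if and only if ξ ⊨ A, i.e., there exists a sequence (q_0, …, q_{l+1}) with q_0 ∈ Q₀, q_{l+1} ∈ Q_F, and x_t ⊨ Δ(q_t, q_{t+1}) for all 0 ≤ t ≤ l. -/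
/-- The `(min,max)` generalized weight `λᵐ : S × Φ → EReal`. -/
noncomputable def lamM {S : Type*} (s : S) : Phi S → EReal
  | .top => 0
  | .bot => ⊥
  | .atom μ => if μ s ≥ 0 then 0 else ((μ s : ℝ) : EReal)
  | .and φ₁ φ₂ => min (lamM s φ₁) (lamM s φ₂)
  | .or φ₁ φ₂ => max (lamM s φ₁) (lamM s φ₂)


lemma lamM_nonpos {S : Type*} (s : S) (φ : Phi S) : lamM s φ ≤ 0 := by
  induction φ with
  | top => exact le_rfl
  | bot => exact bot_le
  | atom μ =>
    by_cases h : 0 ≤ μ s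
    · simp [lamM, h]
    · simpa [lamM, h] using (not_le.mp h).le
  | and φ₁ φ₂ ih₁ _ => exact min_le_of_left_le ih₁
  | or φ₁ φ₂ ih₁ ih₂ => exact max_le ih₁ ih₂

lemma zero_le_lamM_iff {S : Type*} (s : S) (φ : Phi S) : 0 ≤ lamM s φ ↔ φ.Sat s := by
  induction φ with
  | top => simp [lamM, Phi.Sat]
  | bot => simp [lamM, Phi.Sat]
  | atom μ =>
    by_cases h : 0 ≤ μ s <;> simp [lamM, Phi.Sat, h]
  | and φ₁ φ₂ ih₁ ih₂ => simp only [lamM, Phi.Sat, le_min_iff, ih₁, ih₂]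
  | or φ₁ φ₂ ih₁ ih₂ => simp only [lamM, Phi.Sat, le_max_iff, ih₁, ih₂]

lemma le_iSup_iff_of_finite {ι α : Type*} [Finite ι] [CompleteLinearOrder α] {f : ι → α} {a : α}
    (ha : a ≠ ⊥) : a ≤ ⨆ i, f i ↔ ∃ i, a ≤ f i := by
  rcases isEmpty_or_nonempty ι with hι | hι
  · simp [ha]
  · obtain ⟨i, hi⟩ := Finite.exists_max f
    rw [le_antisymm (iSup_le hi) (le_iSup f i)]
    exact ⟨fun h => ⟨i, h⟩, fun ⟨j, hj⟩ => hj.trans (hi j)⟩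

/-- **The `(min,max)` trace weight vanishes exactly on accepted traces.**
For a symbolic automaton with finitely many locations `Q`, initial locations
`Q₀`, accepting locations `Q_F`, and transition labels `Δ`, and a trace
`x = (x 0, …, x l)`, define `wᵐ(ξ)` as the supremum (in `EReal`, `= -∞` if no
such sequence exists) over all location sequences `q : Fin (l+2) → Q` with
`q 0 ∈ Q₀` and `q (l+1) ∈ Q_F` of `min_{0 ≤ t ≤ l} λᵐ(x t, Δ (q t) (q (t+1)))`.
Then `wᵐ(ξ) = 0` iff `ξ ⊨ A`, i.e., there is such a sequence with
`x t ⊨ Δ (q t) (q (t+1))` for all `0 ≤ t ≤ l`. -/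
theorem minmax_trace_weight_eq_zero_iff_accepted
    {S Q : Type*} [Fintype Q] (Q₀ QF : Set Q) (Δ : Q → Q → Phi S)
    (l : ℕ) (x : Fin (l + 1) → S) :
    (⨆ q : {q : Fin (l + 2) → Q // q 0 ∈ Q₀ ∧ q (Fin.last (l + 1)) ∈ QF},
        ⨅ t : Fin (l + 1), lamM (x t) (Δ (q.1 t.castSucc) (q.1 t.succ))) = 0 ↔
      ∃ q : Fin (l + 2) → Q, q 0 ∈ Q₀ ∧ q (Fin.last (l + 1)) ∈ QF ∧
        ∀ t : Fin (l + 1), Phi.Sat (x t) (Δ (q t.castSucc) (q t.succ)) := by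
  rw [le_antisymm_iff, le_iSup_iff_of_finite EReal.zero_ne_bot]
  refine (and_iff_right ?_).trans ?_
  · exact iSup_le fun _ => iInf_le_of_le 0 (lamM_nonpos _ _)
  · simp only [le_iInf_iff, zero_le_lamM_iff, Subtype.exists, exists_prop, and_assoc]
end

section
/- Let S be a type, Q a finite type of locations with subsets Q₀ and Q_F, Δ : Q → Q → Φ a transition labeling by predicates over S, and ξ = (x_0, …, x_l) ∈ S^{l+1} a trace. Define w⁺(ξ) = sup over location sequences (q_0, …, q_{l+1}) with q_0 ∈ Q₀, q_{l+1} ∈ Q_F of Σ_{t=0}^{l} λ⁺(x_t, Δ(q_t, q_{t+1})), and wᵐ(ξ) = sup over the same sequences of min_{0 ≤ t ≤ l} λᵐ(x_t, Δ(q_t, q_{t+1})) (suprema in EReal). Then w⁺(ξ) ≤ wᵐ(ξ). -/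
/-!
Every `λ⁺`-weight is nonpositive, and a sum of nonpositive terms lies below each of them. Hence
`λ⁺ ≤ λᵐ` (at a conjunction, `a + b ≤ min a b`), and along any location sequence the sum of the
`λ⁺`-weights lies below their minimum, which is at most the minimum of the `λᵐ`-weights.
-/

theorem Finset.sum_le_single_of_nonpos {ι M : Type*} [AddCommMonoid M] [PartialOrder M]
    [IsOrderedAddMonoid M] {s : Finset ι} {f : ι → M} (hf : ∀ i ∈ s, f i ≤ 0) {a : ι}
    (ha : a ∈ s) : ∑ i ∈ s, f i ≤ f a :=
  Finset.single_le_sum (N := Mᵒᵈ) hf ha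

theorem sum_le_iInf_of_nonpos {ι M : Type*} [Fintype ι] [AddCommMonoid M] [CompleteLattice M]
    [IsOrderedAddMonoid M] {f : ι → M} (hf : ∀ i, f i ≤ 0) : ∑ i, f i ≤ ⨅ i, f i :=
  le_iInf fun a => Finset.sum_le_single_of_nonpos (fun i _ => hf i) (Finset.mem_univ a)

theorem lamP_le_lamM {S : Type*} (s : S) (φ : Phi S) : lamP s φ ≤ lamM s φ := by
  induction φ with
  | top | bot | atom μ => exact le_rfl
  | and φ₁ φ₂ h₁ h₂ =>
    exact le_min ((add_le_of_nonpos_right (lamP_nonpos s φ₂)).trans h₁)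
      ((add_le_of_nonpos_left (lamP_nonpos s φ₁)).trans h₂)
  | or φ₁ φ₂ h₁ h₂ => exact max_le_max h₁ h₂

theorem maxplus_trace_weight_le_minmax_trace_weight_general
    {S Q : Type*} (Q₀ QF : Set Q) (Δ : Q → Q → Phi S)
    (l : ℕ) (x : Fin (l + 1) → S) :
    (⨆ q : {q : Fin (l + 2) → Q // q 0 ∈ Q₀ ∧ q (Fin.last (l + 1)) ∈ QF},
        ∑ t : Fin (l + 1), lamP (x t) (Δ (q.1 t.castSucc) (q.1 t.succ))) ≤
      (⨆ q : {q : Fin (l + 2) → Q // q 0 ∈ Q₀ ∧ q (Fin.last (l + 1)) ∈ QF},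
        ⨅ t : Fin (l + 1), lamM (x t) (Δ (q.1 t.castSucc) (q.1 t.succ))) := by
  refine iSup_mono fun q => (sum_le_iInf_of_nonpos fun t => lamP_nonpos _ _).trans ?_
  exact iInf_mono fun t => lamP_le_lamM _ _

/-- **The `(max,+)` trace weight is bounded above by the `(min,max)` trace
weight.** With `w⁺(ξ)` the supremum over accepting-shaped location sequences of
the sum of `λ⁺`-weights, and `wᵐ(ξ)` the supremum over the same sequences of
the minimum of `λᵐ`-weights (suprema in `EReal`), we have `w⁺(ξ) ≤ wᵐ(ξ)`. -/
theorem maxplus_trace_weight_le_minmax_trace_weight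
    {S Q : Type*} [Fintype Q] (Q₀ QF : Set Q) (Δ : Q → Q → Phi S)
    (l : ℕ) (x : Fin (l + 1) → S) :
    (⨆ q : {q : Fin (l + 2) → Q // q 0 ∈ Q₀ ∧ q (Fin.last (l + 1)) ∈ QF},
        ∑ t : Fin (l + 1), lamP (x t) (Δ (q.1 t.castSucc) (q.1 t.succ))) ≤
      (⨆ q : {q : Fin (l + 2) → Q // q 0 ∈ Q₀ ∧ q (Fin.last (l + 1)) ∈ QF},
        ⨅ t : Fin (l + 1), lamM (x t) (Δ (q.1 t.castSucc) (q.1 t.succ))) :=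
  maxplus_trace_weight_le_minmax_trace_weight_general Q₀ QF Δ l x
end
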